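/- arXiv:1111.6244 — 2 statements merged into one kernel-verified Lean document; each statement's English description precedes it below -/
import Mathlib

section
/- Let S be a set of a·k random vectors in GF(2)^k, each chosen independently and uniformly at random, where a, b are positive reals with b < a and (a−b)k ≥ k. Then with probability at least 1 − 2^{−k(a − b − 1 − a·h(b/a))}, every subset of S of size (a−b)k has rank k, where h(p) = −p log₂ p − (1−p) log₂(1−p) is the binary entropy function. -/
/-! A tuple is bad when the vectors at some `m = A - B` positions lie in a proper subspace,
hence in the kernel of a nonzero functional. For fixed positions and a fixed functional this
happens with probability `2^{-m}`; there are fewer than `2^k` functionals and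
`C(A, m) ≤ 2^{A h(b/a)}` choices of positions, the latter because the `r`-th term of
`(p + (1 - p))^n = 1` at `p = r / n` is `C(n, r) 2^{-n h(p)}`. -/

/-- Binary entropy function with logarithm base 2. -/
noncomputable def binEnt (p : ℝ) : ℝ := -p * Real.logb 2 p - (1 - p) * Real.logb 2 (1 - p)

open Finset Module Submodule

lemma Nat.pow_mul_one_sub_pow_mul_choose_le_one {n r : ℕ} (hr : r ≤ n) {p : ℝ} (hp₀ : 0 ≤ p)
    (hp₁ : p ≤ 1) : p ^ r * (1 - p) ^ (n - r) * n.choose r ≤ 1 :=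
  calc p ^ r * (1 - p) ^ (n - r) * n.choose r
      ≤ ∑ i ∈ range (n + 1), p ^ i * (1 - p) ^ (n - i) * n.choose i :=
        single_le_sum (f := fun i => p ^ i * (1 - p) ^ (n - i) * n.choose i)
          (fun i _ => by have := sub_nonneg.2 hp₁; positivity)
          (mem_range.2 (Nat.lt_succ_of_le hr))
    _ = 1 := by rw [← add_pow, add_sub_cancel, one_pow]

lemma two_rpow_natCast_mul_logb {r : ℕ} {x : ℝ} (h : r = 0 ∨ 0 < x) :
    (2 : ℝ) ^ (r * Real.logb 2 x) = x ^ r := by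
  rcases h with rfl | hx
  · simp
  · rw [mul_comm, Real.rpow_mul_natCast zero_le_two, Real.rpow_logb two_pos (by norm_num) hx]

lemma Nat.choose_le_two_rpow_mul_binEnt {n r : ℕ} (hr : r ≤ n) :
    (n.choose r : ℝ) ≤ 2 ^ (n * binEnt (r / n)) := by
  set p : ℝ := r / n
  have hp : p * n = r := by
    rcases Nat.eq_zero_or_pos n with rfl | hn
    · simp [Nat.le_zero.1 hr]
    · exact div_mul_cancel₀ _ (by positivity)
  have hp₀ : 0 ≤ p := by positivity
  have hp₁ : p ≤ 1 := div_le_one_of_le₀ (by exact_mod_cast hr) (by positivity)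
  have hweight : p ^ r * (1 - p) ^ (n - r) = (2 : ℝ) ^ (-(n * binEnt p)) := by
    have hexp : -(n * binEnt p) =
        r * Real.logb 2 p + ((n - r : ℕ) : ℝ) * Real.logb 2 (1 - p) := by
      rw [binEnt, Nat.cast_sub hr, ← hp]; ring
    rw [hexp, Real.rpow_add two_pos, two_rpow_natCast_mul_logb, two_rpow_natCast_mul_logb]
    · refine (Nat.eq_zero_or_pos _).imp_right fun h => ?_
      have : (r : ℝ) < n := by exact_mod_cast Nat.lt_of_sub_pos h
      nlinarith
    · refine (Nat.eq_zero_or_pos _).imp_right fun h => ?_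
      have : (0 : ℝ) < r := by exact_mod_cast h
      nlinarith
  have := Nat.pow_mul_one_sub_pow_mul_choose_le_one hr hp₀ hp₁
  rwa [hweight, Real.rpow_neg zero_le_two, mul_comm, ← div_eq_mul_inv,
    div_le_one (by positivity)] at this

lemma Nat.card_le_card_mul_of_forall_exists {α ι : Type*} [Finite α] [Finite ι]
    {Q : α → Prop} (P : ι → α → Prop) (hQ : ∀ a, Q a → ∃ i, P i a) {c : ℝ}
    (hc : ∀ i, (Nat.card {a // P i a} : ℝ) ≤ c) :
    (Nat.card {a // Q a} : ℝ) ≤ Nat.card ι * c := by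
  have := Fintype.ofFinite ι
  have hsurj : Function.Surjective
      fun x : Σ i, {a // P i a} => (⟨x.2, x.1, x.2.2⟩ : {a // ∃ i, P i a}) :=
    fun ⟨a, i, hi⟩ => ⟨⟨i, a, hi⟩, rfl⟩
  calc (Nat.card {a // Q a} : ℝ) ≤ Nat.card {a // ∃ i, P i a} := by
        exact_mod_cast Nat.card_le_card_of_injective _ (Subtype.impEmbedding _ _ hQ).injective
    _ ≤ Nat.card (Σ i, {a // P i a}) := by
        exact_mod_cast Nat.card_le_card_of_surjective _ hsurj
    _ = ∑ i, (Nat.card {a // P i a} : ℝ) := by rw [Nat.card_sigma]; push_cast; rfl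
    _ ≤ Nat.card ι * c := by
        simpa [Nat.card_eq_fintype_card] using sum_le_card_nsmul univ _ c fun i _ => hc i

lemma Nat.card_pi_forall_mem {ι V : Type*} [Fintype ι] (S : Finset ι) (K : Set V) :
    Nat.card {v : ι → V // ∀ i ∈ S, v i ∈ K} =
      Nat.card K ^ #S * Nat.card V ^ (Fintype.card ι - #S) := by
  classical
  rw [Nat.card_congr (Equiv.subtypePiEquivPi (p := fun i x => i ∈ S → x ∈ K)), Nat.card_pi]
  have (i : ι) :
      Nat.card {x // i ∈ S → x ∈ K} = if i ∈ S then Nat.card K else Nat.card V := by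
    split_ifs with hi <;> simp [hi]
  simp_rw [this, prod_ite, prod_const, filter_not, card_univ_sdiff]
  simp

variable {F V : Type*} [Field F] [AddCommGroup V] [Module F V]

lemma LinearMap.natCard_ker_mul_natCard_of_ne_zero {φ : Dual F V} (hφ : φ ≠ 0) :
    Nat.card (ker φ) * Nat.card F = Nat.card V := by
  rw [card_eq_card_quotient_mul_card (ker φ),
    Nat.card_congr (φ.quotKerEquivOfSurjective (LinearMap.surjective_of_ne_zero hφ)).toEquiv]

lemma Module.natCard_dual [Module.Finite F V] : Nat.card (Dual F V) = Nat.card V := by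
  rw [natCard_eq_pow_finrank (K := F), natCard_eq_pow_finrank (K := F) (V := V),
    Subspace.dual_finrank_eq]

lemma natCard_span_image_ne_top_le [Finite F] [Module.Finite F V] {ι : Type*} [Fintype ι]
    (S : Finset ι) :
    (Nat.card {v : ι → V // span F (v '' S) ≠ ⊤} : ℝ) ≤
      (Nat.card F : ℝ) ^ ((finrank F V : ℝ) - #S) * Nat.card (ι → V) := by
  have := Module.finite_of_finite F (M := V)
  have := Module.finite_of_finite F (M := Dual F V)
  set q : ℝ := (Nat.card F : ℝ)
  have hq : 0 < q := by simp [q, Nat.card_pos]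
  have hV : (Nat.card V : ℝ) = q ^ finrank F V := by
    rw [natCard_eq_pow_finrank (K := F)]; push_cast; rfl
  have hcover (v : ι → V) (hv : span F (v '' S) ≠ ⊤) :
      ∃ φ : {φ : Dual F V // φ ≠ 0}, ∀ i ∈ S, v i ∈ (LinearMap.ker φ.1 : Set V) := by
    obtain ⟨φ, hφ, hle⟩ := (span F (v '' S)).exists_le_ker_of_lt_top hv.lt_top
    exact ⟨⟨φ, hφ⟩, fun i hi => hle (subset_span ⟨i, hi, rfl⟩)⟩
  calc (Nat.card {v : ι → V // span F (v '' S) ≠ ⊤} : ℝ)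
      ≤ Nat.card {φ : Dual F V // φ ≠ 0} *
          ((Nat.card V / q) ^ #S * Nat.card V ^ (Fintype.card ι - #S)) := by
        refine Nat.card_le_card_mul_of_forall_exists _ hcover fun φ => ?_
        rw [Nat.card_pi_forall_mem, ← LinearMap.natCard_ker_mul_natCard_of_ne_zero φ.2]
        push_cast
        rw [mul_div_cancel_right₀ _ hq.ne']
    _ ≤ Nat.card V * ((Nat.card V / q) ^ #S * Nat.card V ^ (Fintype.card ι - #S)) := by
        gcongr
        exact_mod_cast (Finite.card_subtype_le _).trans (natCard_dual (F := F)).le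
    _ = q ^ ((finrank F V : ℝ) - #S) * Nat.card (ι → V) := by
        rw [Nat.card_fun, Real.rpow_sub hq, Real.rpow_natCast, Real.rpow_natCast]
        push_cast
        rw [hV, pow_sub₀ _ (by positivity) (card_le_univ S), Nat.card_eq_fintype_card, div_pow]
        field_simp

lemma natCard_exists_span_image_ne_top_le [Finite F] [Module.Finite F V] {ι : Type*}
    [Fintype ι] (m : ℕ) :
    (Nat.card {v : ι → V // ∃ S : Finset ι, #S = m ∧ span F (v '' S) ≠ ⊤} : ℝ) ≤
      (Fintype.card ι).choose m *
        ((Nat.card F : ℝ) ^ ((finrank F V : ℝ) - m) * Nat.card (ι → V)) := by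
  have := Module.finite_of_finite F (M := V)
  have hS : Nat.card {S : Finset ι // #S = m} = (Fintype.card ι).choose m := by
    rw [Nat.card_eq_fintype_card, Fintype.card_finset_len]
  rw [← hS]
  refine Nat.card_le_card_mul_of_forall_exists (fun S v => span F (v '' S.1) ≠ ⊤)
    (fun v ⟨S, hS, hv⟩ => ⟨⟨S, hS⟩, hv⟩) fun S => ?_
  simpa only [S.2] using natCard_span_image_ne_top_le (F := F) S.1

theorem one_sub_mul_le_natCard_forall_finrank_span_image_eq [Finite F] [Module.Finite F V]
    {ι : Type*} [Fintype ι] (m : ℕ) :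
    (1 - (Fintype.card ι).choose m * (Nat.card F : ℝ) ^ ((finrank F V : ℝ) - m)) *
        Nat.card (ι → V) ≤
      Nat.card {v : ι → V //
        ∀ S : Finset ι, #S = m → finrank F (span F (v '' S)) = finrank F V} := by
  have := Module.finite_of_finite F (M := V)
  have hsplit := Nat.card_congr (Equiv.sumCompl fun v : ι → V =>
    ∀ S : Finset ι, #S = m → finrank F (span F (v '' S)) = finrank F V)
  rw [Nat.card_sum] at hsplit
  have hbad := natCard_exists_span_image_ne_top_le (F := F) (V := V) (ι := ι) m
  simp only [← Submodule.eq_top_iff_finrank_eq, not_forall, exists_prop, ← ne_eq] at hsplit ⊢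
  rw [← hsplit] at hbad ⊢
  push_cast at hbad ⊢
  linarith

theorem stmt_7_general (k A B : ℕ) (a b : ℝ) (hab : b < a)
    (hA : (A : ℝ) = a * k) (hB : (B : ℝ) = b * k) :
    (1 - (2 : ℝ) ^ (-(k : ℝ) * (a - b - 1 - a * binEnt (b / a)))) * 2 ^ (k * A)
      ≤ (Nat.card {v : Fin A → (Fin k → ZMod 2) //
          ∀ S : Finset (Fin A), S.card = A - B →
            Module.finrank (ZMod 2) (Submodule.span (ZMod 2) (v '' ↑S)) = k} : ℝ) := by
  rcases Nat.eq_zero_or_pos k with rfl | hk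
  · simp
  have hBA : B ≤ A := by exact_mod_cast (show (B : ℝ) ≤ A by rw [hA, hB]; gcongr)
  have hratio : (B : ℝ) / A = b / a := by rw [hA, hB, mul_div_mul_right _ _ (by positivity)]
  have hchoose : (A.choose (A - B) : ℝ) ≤ 2 ^ (A * binEnt (b / a)) := by
    rw [Nat.choose_symm hBA, ← hratio]
    exact Nat.choose_le_two_rpow_mul_binEnt hBA
  have hcount := one_sub_mul_le_natCard_forall_finrank_span_image_eq
    (F := ZMod 2) (V := Fin k → ZMod 2) (ι := Fin A) (A - B)
  simp only [finrank_fin_fun, Nat.card_zmod, Fintype.card_fin, Nat.card_fun, Nat.card_fin,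
    ← pow_mul] at hcount
  refine le_trans ?_ hcount
  push_cast
  gcongr
  calc (A.choose (A - B) : ℝ) * 2 ^ ((k : ℝ) - (A - B : ℕ))
      ≤ 2 ^ (A * binEnt (b / a)) * 2 ^ ((k : ℝ) - (A - B : ℕ)) := by gcongr
    _ = 2 ^ (-(k : ℝ) * (a - b - 1 - a * binEnt (b / a))) := by
      rw [← Real.rpow_add two_pos, Nat.cast_sub hBA, hA, hB]
      congr 1; ring

/-- Let S be a set of a·k independent uniformly random vectors in GF(2)^k, with
a, b positive reals, b < a and (a−b)k ≥ k. With probability at least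
1 − 2^{−k(a − b − 1 − a·h(b/a))}, every subset of S of size (a−b)k has rank k.
Here A = a·k and B = b·k, and we count the favorable tuples among all 2^(k·A) tuples. -/
theorem stmt_7 (k A B : ℕ) (a b : ℝ) (hb : 0 < b) (hab : b < a)
    (hA : (A : ℝ) = a * k) (hB : (B : ℝ) = b * k) (hk : k ≤ A - B) :
    (1 - (2 : ℝ) ^ (-(k : ℝ) * (a - b - 1 - a * binEnt (b / a)))) * 2 ^ (k * A)
      ≤ (Nat.card {v : Fin A → (Fin k → ZMod 2) //
          ∀ S : Finset (Fin A), S.card = A - B →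
            Module.finrank (ZMod 2) (Submodule.span (ZMod 2) (v '' ↑S)) = k} : ℝ) :=
  stmt_7_general k A B a b hab hA hB
end

section
/- Let A be an N×k matrix over GF(2) and b ∈ GF(2)^N with N = k + 2f + ε, where f < k and ε ≥ 0. Suppose there exists x₀ ∈ GF(2)^k and a set G of row indices with |G| ≥ k + f + ε ('uncorrupted rows') such that A_i · x₀ = b_i for all i ∈ G, and suppose every subset of G of size k + ε contains k linearly independent rows of A. Then x₀ is the unique vector x ∈ GF(2)^k satisfying A_i · x = b_i for at least k + f + ε row indices i. -/
/-!
Any two vectors that each satisfy at least `k + f + ε` of the `N = k + 2f + ε` equations agree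
on at least `k + ε` rows; if one of them is `x₀`, those common rows lie in `G` and so contain `k`
linearly independent rows of `A`. The difference of the two vectors is orthogonal to a basis of
`GF(2)^k`, hence zero.
-/

theorem Finset.le_card_inter_of_add_le {α : Type*} [Fintype α] [DecidableEq α]
    {s t : Finset α} {m : ℕ} (h : Fintype.card α + m ≤ s.card + t.card) :
    m ≤ (s ∩ t).card := by
  have := Finset.card_union_add_card_inter s t
  have := Finset.card_le_univ (s ∪ t)
  omega

namespace Matrix

variable {K ι m n : Type*} [Field K] [Fintype n]

theorem eq_zero_of_linearIndependent_of_dotProduct_eq_zero [Fintype ι] {v : ι → n → K}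
    (hv : LinearIndependent K v) (hcard : Fintype.card ι = Fintype.card n) {y : n → K}
    (hy : ∀ i, v i ⬝ᵥ y = 0) : y = 0 := by
  have hspan : Submodule.span K (Set.range v) = ⊤ :=
    hv.span_eq_top_of_card_eq_finrank' (by simpa using hcard)
  refine dotProduct_eq_zero y fun w => ?_
  have hw : w ∈ Submodule.span K (Set.range v) := hspan ▸ Submodule.mem_top
  rw [dotProduct_comm]
  induction hw using Submodule.span_induction with
  | mem _ hu => obtain ⟨i, rfl⟩ := hu; exact hy i
  | zero => exact zero_dotProduct y
  | add _ _ _ _ hu hw => rw [add_dotProduct, hu, hw, add_zero]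
  | smul c _ _ hu => rw [smul_dotProduct, hu, smul_zero]

theorem eq_of_mulVec_eq_of_linearIndependent_rows {A : Matrix m n K} {T : Finset m}
    (hT : LinearIndependent K fun i : T => A i) (hcard : T.card = Fintype.card n)
    {x y : n → K} (h : ∀ i ∈ T, A.mulVec x i = A.mulVec y i) : x = y := by
  refine sub_eq_zero.mp (eq_zero_of_linearIndependent_of_dotProduct_eq_zero hT
    (by simpa using hcard) fun i => ?_)
  rw [dotProduct_sub, sub_eq_zero]
  exact h i i.2

end Matrix

theorem stmt_9_general (k f ε N : ℕ) (hN : N = k + 2 * f + ε)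
    (A : Matrix (Fin N) (Fin k) (ZMod 2)) (b : Fin N → ZMod 2)
    (x₀ : Fin k → ZMod 2) (G : Finset (Fin N)) (hG : k + f + ε ≤ G.card)
    (hsat : ∀ i ∈ G, A.mulVec x₀ i = b i)
    (hindep : ∀ T ⊆ G, T.card = k + ε →
      ∃ T' ⊆ T, T'.card = k ∧ LinearIndependent (ZMod 2) (fun i : {x // x ∈ T'} => A i.1)) :
    ∀ x : Fin k → ZMod 2,
      k + f + ε ≤ (Finset.univ.filter (fun i => A.mulVec x i = b i)).card → x = x₀ := by
  intro x hx
  set S := Finset.univ.filter fun i => A.mulVec x i = b i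
  have hGS : k + ε ≤ (G ∩ S).card :=
    Finset.le_card_inter_of_add_le (by rw [Fintype.card_fin]; omega)
  obtain ⟨T, hTGS, hTcard⟩ := Finset.exists_subset_card_eq hGS
  obtain ⟨T', hT'T, hT'card, hli⟩ := hindep T (hTGS.trans Finset.inter_subset_left) hTcard
  refine Matrix.eq_of_mulVec_eq_of_linearIndependent_rows hli (by simpa using hT'card)
    fun i hi => ?_
  obtain ⟨hiG, hiS⟩ := Finset.mem_inter.mp (hTGS (hT'T hi))
  rw [hsat i hiG]
  exact (Finset.mem_filter.mp hiS).2

/-- Exhaustive-search decoding against a uniform adversary: with N = k + 2f + ε rows,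
f < k, a set G of at least k + f + ε uncorrupted rows satisfying A_i · x₀ = b_i, and
every (k+ε)-subset of G containing k linearly independent rows, x₀ is the unique vector
satisfying at least k + f + ε of the equations A_i · x = b_i. -/
theorem stmt_9 (k f ε N : ℕ) (hN : N = k + 2 * f + ε) (hf : f < k)
    (A : Matrix (Fin N) (Fin k) (ZMod 2)) (b : Fin N → ZMod 2)
    (x₀ : Fin k → ZMod 2) (G : Finset (Fin N)) (hG : k + f + ε ≤ G.card)
    (hsat : ∀ i ∈ G, A.mulVec x₀ i = b i)
    (hindep : ∀ T ⊆ G, T.card = k + ε →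
      ∃ T' ⊆ T, T'.card = k ∧ LinearIndependent (ZMod 2) (fun i : {x // x ∈ T'} => A i.1)) :
    ∀ x : Fin k → ZMod 2,
      k + f + ε ≤ (Finset.univ.filter (fun i => A.mulVec x i = b i)).card → x = x₀ :=
  stmt_9_general k f ε N hN A b x₀ G hG hsat hindep
end
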